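/- Let C and D be split chain complexes and let f, f' : C → D be chain maps. Then f and f' are chain homotopic if and only if the restrictions f|_{C^ℓ} and f'|_{C^ℓ} are chain homotopic as chain maps C^ℓ → D^ℓ and the restrictions f|_{C^u} and f'|_{C^u} are chain homotopic as chain maps C^u → D^u. -/

import Mathlib

open CategoryTheory Limits

variable {R : Type} [Ring R]

/-- Admissibility: bounded between 0 and n, finitely generated free in each degree. -/
def IsAdmissible (n : ℕ) (C : ChainComplex (ModuleCat R) ℕ) : Prop :=
  (∀ i, n < i → IsZero (C.X i)) ∧
    (∀ i, Module.Finite R (C.X i)) ∧ (∀ i, Module.Free R (C.X i))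

/-- The lower half `C^ℓ` of a chain complex. -/
noncomputable def lowerHalf (n : ℕ) (C : ChainComplex (ModuleCat R) ℕ) :
    ChainComplex (ModuleCat R) ℕ :=
  ChainComplex.of
    (fun i => if 2 * i < n then C.X i else ModuleCat.of R PUnit)
    (fun i =>
      if h : 2 * (i + 1) < n then
        eqToHom (if_pos h) ≫ C.d (i + 1) i ≫ eqToHom (if_pos (by omega : 2 * i < n)).symm
      else 0)
    (fun i => by
      try dsimp only
      by_cases h : 2 * (i + 1 + 1) < n
      · simp only [dif_pos h, dif_pos (show 2 * (i + 1) < n by omega)]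
        simp
      · simp only [dif_neg h, zero_comp])

/-- The upper half `C^u` of a chain complex. -/
noncomputable def upperHalf (n : ℕ) (C : ChainComplex (ModuleCat R) ℕ) :
    ChainComplex (ModuleCat R) ℕ :=
  ChainComplex.of
    (fun i => if n < 2 * i then C.X i else ModuleCat.of R PUnit)
    (fun i =>
      if h : n < 2 * i then
        eqToHom (if_pos (by omega : n < 2 * (i + 1))) ≫ C.d (i + 1) i ≫ eqToHom (if_pos h).symm
      else 0)
    (fun i => by
      try dsimp only
      by_cases h : n < 2 * i
      · simp only [dif_pos h, dif_pos (show n < 2 * (i + 1) by omega)]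
        simp
      · simp only [dif_neg h, comp_zero])

/-- A chain complex splits if `C_{n/2} = 0` (n even) or `d_{⌈n/2⌉} = 0` (n odd). -/
def Splits (n : ℕ) (C : ChainComplex (ModuleCat R) ℕ) : Prop :=
  if Even n then IsZero (C.X (n / 2)) else C.d (n / 2 + 1) (n / 2) = 0

/-- The restriction of a chain map to the lower halves. -/
noncomputable def lowerMap (n : ℕ) {C D : ChainComplex (ModuleCat R) ℕ} (f : C ⟶ D) :
    lowerHalf n C ⟶ lowerHalf n D where
  f i :=
    if h : 2 * i < n then
      eqToHom (if_pos h) ≫ f.f i ≫ eqToHom (if_pos h).symm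
    else 0
  comm' := by
    rintro i j (rfl : j + 1 = i)
    show _ ≫ (lowerHalf n D).d (j + 1) j = (lowerHalf n C).d (j + 1) j ≫ _
    simp only [lowerHalf, ChainComplex.of_d]
    by_cases h : 2 * (j + 1) < n
    · have h' : 2 * j < n := by omega
      simp [h, h']
    · simp only [dif_neg h, zero_comp, comp_zero]

/-- The restriction of a chain map to the upper halves. -/
noncomputable def upperMap (n : ℕ) {C D : ChainComplex (ModuleCat R) ℕ} (f : C ⟶ D) :
    upperHalf n C ⟶ upperHalf n D where
  f i :=
    if h : n < 2 * i then
      eqToHom (if_pos h) ≫ f.f i ≫ eqToHom (if_pos h).symm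
    else 0
  comm' := by
    rintro i j (rfl : j + 1 = i)
    show _ ≫ (upperHalf n D).d (j + 1) j = (upperHalf n C).d (j + 1) j ≫ _
    simp only [upperHalf, ChainComplex.of_d]
    by_cases h : n < 2 * j
    · have h' : n < 2 * (j + 1) := by omega
      simp [h, h']
    · simp only [dif_neg h, zero_comp, comp_zero]

/-! The lower half of a chain complex is always a subcomplex and the upper half a quotient
complex. When the complex splits, the differential leaving the middle degree vanishes, so the
lower half is also a quotient and the upper half also a subcomplex. Hence each restriction of `f`
is `f` composed with chain maps on either side, so homotopies restrict; and `f` is the sum of its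
two restrictions, conjugated by these inclusions and projections, so homotopies of the halves add
up to a homotopy of `f`. -/

section Halves

variable {n : ℕ} {C D : ChainComplex (ModuleCat R) ℕ}

lemma lowerHalf_X_of_lt {i : ℕ} (h : 2 * i < n) : (lowerHalf n C).X i = C.X i := if_pos h

lemma upperHalf_X_of_lt {i : ℕ} (h : n < 2 * i) : (upperHalf n C).X i = C.X i := if_pos h

lemma isZero_lowerHalf_X {i : ℕ} (h : ¬ 2 * i < n) : IsZero ((lowerHalf n C).X i) := by
  change IsZero (if 2 * i < n then C.X i else ModuleCat.of R PUnit)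
  rw [if_neg h]
  exact ModuleCat.isZero_of_subsingleton _

lemma isZero_upperHalf_X {i : ℕ} (h : ¬ n < 2 * i) : IsZero ((upperHalf n C).X i) := by
  change IsZero (if n < 2 * i then C.X i else ModuleCat.of R PUnit)
  rw [if_neg h]
  exact ModuleCat.isZero_of_subsingleton _

lemma lowerHalf_d_of_lt {i : ℕ} (h : 2 * (i + 1) < n) :
    (lowerHalf n C).d (i + 1) i =
      eqToHom (lowerHalf_X_of_lt h) ≫ C.d (i + 1) i ≫
        eqToHom (lowerHalf_X_of_lt (show 2 * i < n by omega)).symm := by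
  simp only [lowerHalf, ChainComplex.of_d]
  rw [dif_pos h]

lemma lowerHalf_d_of_not_lt {i : ℕ} (h : ¬ 2 * (i + 1) < n) :
    (lowerHalf n C).d (i + 1) i = 0 := by
  simp only [lowerHalf, ChainComplex.of_d]
  rw [dif_neg h]
  rfl

lemma upperHalf_d_of_lt {i : ℕ} (h : n < 2 * i) :
    (upperHalf n C).d (i + 1) i =
      eqToHom (upperHalf_X_of_lt (show n < 2 * (i + 1) by omega)) ≫ C.d (i + 1) i ≫
        eqToHom (upperHalf_X_of_lt h).symm := by
  simp only [upperHalf, ChainComplex.of_d]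
  rw [dif_pos h]

lemma upperHalf_d_of_not_lt {i : ℕ} (h : ¬ n < 2 * i) :
    (upperHalf n C).d (i + 1) i = 0 := by
  simp only [upperHalf, ChainComplex.of_d]
  rw [dif_neg h]
  rfl

lemma lowerMap_f_of_lt (f : C ⟶ D) {i : ℕ} (h : 2 * i < n) :
    (lowerMap n f).f i =
      eqToHom (lowerHalf_X_of_lt h) ≫ f.f i ≫ eqToHom (lowerHalf_X_of_lt h).symm :=
  dif_pos h

lemma upperMap_f_of_lt (f : C ⟶ D) {i : ℕ} (h : n < 2 * i) :
    (upperMap n f).f i =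
      eqToHom (upperHalf_X_of_lt h) ≫ f.f i ≫ eqToHom (upperHalf_X_of_lt h).symm :=
  dif_pos h

lemma Splits.isZero_X (hC : Splits n C) {i : ℕ} (h : 2 * i = n) : IsZero (C.X i) := by
  have he : Even n := ⟨i, by omega⟩
  rw [Splits, if_pos he] at hC
  rwa [show n / 2 = i by omega] at hC

lemma Splits.d_eq_zero (hC : Splits n C) {j : ℕ} (h₁ : 2 * j ≤ n) (h₂ : n ≤ 2 * j + 2) :
    C.d (j + 1) j = 0 := by
  rcases Nat.even_or_odd n with ⟨k, hk⟩ | ⟨k, hk⟩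
  · rcases (show j = k ∨ j + 1 = k by omega) with rfl | rfl
    · exact (hC.isZero_X (by omega)).eq_of_tgt _ _
    · exact (hC.isZero_X (by omega)).eq_of_src _ _
  · have hodd : ¬ Even n := Nat.not_even_iff_odd.mpr ⟨k, hk⟩
    rw [Splits, if_neg hodd, show n / 2 = j by omega] at hC
    exact hC

variable (n C)

noncomputable def lowerHalfι : lowerHalf n C ⟶ C where
  f i := if h : 2 * i < n then eqToHom (lowerHalf_X_of_lt h) else 0
  comm' := by
    rintro i j (rfl : j + 1 = i)
    by_cases h : 2 * (j + 1) < n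
    · rw [lowerHalf_d_of_lt h, dif_pos h, dif_pos (show 2 * j < n by omega)]
      simp
    · rw [lowerHalf_d_of_not_lt h, dif_neg h, zero_comp, zero_comp]

noncomputable def upperHalfπ : C ⟶ upperHalf n C where
  f i := if h : n < 2 * i then eqToHom (upperHalf_X_of_lt h).symm else 0
  comm' := by
    rintro i j (rfl : j + 1 = i)
    by_cases h : n < 2 * j
    · rw [upperHalf_d_of_lt h, dif_pos h, dif_pos (show n < 2 * (j + 1) by omega)]
      simp
    · rw [upperHalf_d_of_not_lt h, dif_neg h, comp_zero, comp_zero]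

variable {n C}

noncomputable def lowerHalfπ (hC : Splits n C) : C ⟶ lowerHalf n C where
  f i := if h : 2 * i < n then eqToHom (lowerHalf_X_of_lt h).symm else 0
  comm' := by
    rintro i j (rfl : j + 1 = i)
    by_cases h : 2 * (j + 1) < n
    · rw [lowerHalf_d_of_lt h, dif_pos h, dif_pos (show 2 * j < n by omega)]
      simp
    · by_cases hj : 2 * j < n
      · rw [lowerHalf_d_of_not_lt h, dif_neg h, dif_pos hj, hC.d_eq_zero (by omega) (by omega),
          comp_zero, zero_comp]
      · exact (isZero_lowerHalf_X hj).eq_of_tgt _ _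

noncomputable def upperHalfι (hC : Splits n C) : upperHalf n C ⟶ C where
  f i := if h : n < 2 * i then eqToHom (upperHalf_X_of_lt h) else 0
  comm' := by
    rintro i j (rfl : j + 1 = i)
    by_cases h : n < 2 * j
    · rw [upperHalf_d_of_lt h, dif_pos h, dif_pos (show n < 2 * (j + 1) by omega)]
      simp
    · by_cases hj : n < 2 * (j + 1)
      · rw [upperHalf_d_of_not_lt h, dif_neg h, dif_pos hj, hC.d_eq_zero (by omega) (by omega),
          comp_zero, zero_comp]
      · exact (isZero_upperHalf_X hj).eq_of_src _ _

lemma lowerMap_eq_comp (hD : Splits n D) (f : C ⟶ D) :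
    lowerMap n f = lowerHalfι n C ≫ f ≫ lowerHalfπ hD := by
  ext i : 1
  by_cases h : 2 * i < n
  · simp [lowerMap_f_of_lt f h, lowerHalfι, lowerHalfπ, h]
  · exact (isZero_lowerHalf_X h).eq_of_src _ _

lemma upperMap_eq_comp (hC : Splits n C) (f : C ⟶ D) :
    upperMap n f = upperHalfι hC ≫ f ≫ upperHalfπ n D := by
  ext i : 1
  by_cases h : n < 2 * i
  · simp [upperMap_f_of_lt f h, upperHalfι, upperHalfπ, h]
  · exact (isZero_upperHalf_X h).eq_of_src _ _

lemma eq_lowerMap_add_upperMap (hC : Splits n C) (hD : Splits n D) (f : C ⟶ D) :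
    f = lowerHalfπ hC ≫ lowerMap n f ≫ lowerHalfι n D +
      upperHalfπ n C ≫ upperMap n f ≫ upperHalfι hD := by
  ext i : 1
  rcases lt_trichotomy (2 * i) n with h | h | h
  · simp [lowerMap_f_of_lt f h, lowerHalfι, lowerHalfπ, upperHalfπ, upperHalfι, h,
      show ¬ n < 2 * i by omega]
  · exact (hC.isZero_X h).eq_of_src _ _
  · simp [upperMap_f_of_lt f h, lowerHalfι, lowerHalfπ, upperHalfπ, upperHalfι, h,
      show ¬ 2 * i < n by omega]

end Halves

namespace Homotopy

variable {n : ℕ} {C D : ChainComplex (ModuleCat R) ℕ} {f f' : C ⟶ D}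

noncomputable def restrictLower (hD : Splits n D) (h : Homotopy f f') :
    Homotopy (lowerMap n f) (lowerMap n f') :=
  (ofEq (lowerMap_eq_comp hD f)).trans <|
    ((h.compRight _).compLeft _).trans (ofEq (lowerMap_eq_comp hD f').symm)

noncomputable def restrictUpper (hC : Splits n C) (h : Homotopy f f') :
    Homotopy (upperMap n f) (upperMap n f') :=
  (ofEq (upperMap_eq_comp hC f)).trans <|
    ((h.compRight _).compLeft _).trans (ofEq (upperMap_eq_comp hC f').symm)

noncomputable def ofRestrictions (hC : Splits n C) (hD : Splits n D)
    (hl : Homotopy (lowerMap n f) (lowerMap n f'))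
    (hu : Homotopy (upperMap n f) (upperMap n f')) : Homotopy f f' :=
  (ofEq (eq_lowerMap_add_upperMap hC hD f)).trans <|
    (((hl.compRight _).compLeft _).add ((hu.compRight _).compLeft _)).trans
      (ofEq (eq_lowerMap_add_upperMap hC hD f').symm)

end Homotopy

theorem split_chainMap_homotopic_iff_general (n : ℕ)
    (C D : ChainComplex (ModuleCat R) ℕ)
    (hC : Splits n C) (hD : Splits n D) (f f' : C ⟶ D) :
    Nonempty (Homotopy f f') ↔
      Nonempty (Homotopy (lowerMap n f) (lowerMap n f')) ∧
        Nonempty (Homotopy (upperMap n f) (upperMap n f')) :=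
  ⟨fun ⟨h⟩ => ⟨⟨h.restrictLower hD⟩, ⟨h.restrictUpper hC⟩⟩,
    fun ⟨⟨hl⟩, ⟨hu⟩⟩ => ⟨.ofRestrictions hC hD hl hu⟩⟩

/-- For split chain complexes `C` and `D`, two chain maps `f, f' : C ⟶ D` are
chain homotopic if and only if their restrictions to the lower halves are chain homotopic and
their restrictions to the upper halves are chain homotopic. -/
theorem split_chainMap_homotopic_iff (n : ℕ) (hn : 0 < n)
    (C D : ChainComplex (ModuleCat R) ℕ)
    (hCa : IsAdmissible n C) (hDa : IsAdmissible n D)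
    (hC : Splits n C) (hD : Splits n D) (f f' : C ⟶ D) :
    Nonempty (Homotopy f f') ↔
      Nonempty (Homotopy (lowerMap n f) (lowerMap n f')) ∧
        Nonempty (Homotopy (upperMap n f) (upperMap n f')) :=
  split_chainMap_homotopic_iff_general n C D hC hD f f'
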